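/- arXiv:1903.02777 — 6 statements merged into one kernel-verified Lean document; each statement's English description precedes it below -/
import Mathlib

section
/- Let G be a finite simple graph with chromatic number m, and let → be an acyclic orientation of G. Then the oriented graph contains a directed path on m vertices (i.e., a directed path v_0 → v_1 → ⋯ → v_{m-1} of length m−1). -/
/-- An orientation of a simple graph `G`: each edge of `G` gets exactly one
direction, and there are no other directed edges. -/
structure SimpleGraph.Orientation {V : Type*} (G : SimpleGraph V) where
  adj : V → V → Prop
  adj_sub : ∀ {u v : V}, adj u v → G.Adj u v
  choice : ∀ {u v : V}, G.Adj u v → adj u v ∨ adj v u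
  asymm : ∀ {u v : V}, adj u v → ¬ adj v u

namespace SimpleGraph.Orientation

variable {V : Type*} {G : SimpleGraph V} (O : G.Orientation)

/-- An orientation is acyclic if it has no directed cycles. -/
def Acyclic : Prop := ∀ v : V, ¬ Relation.TransGen O.adj v v

/-- `f` enumerates the vertices of a directed path `f 0 → f 1 → ⋯ → f k`. -/
def IsDipath {k : ℕ} (f : Fin (k + 1) → V) : Prop :=
  ∀ i : Fin k, O.adj (f i.castSucc) (f i.succ)

/-- An orientation is semi-transitive if it is acyclic and for every directed
path `v₀ → v₁ → ⋯ → v_k`, either `v₀` and `v_k` are non-adjacent in `G`, or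
`v_i → v_j` is a directed edge for all `i < j`. -/
def SemiTransitive : Prop :=
  O.Acyclic ∧ ∀ (k : ℕ) (f : Fin (k + 1) → V), O.IsDipath f →
    ¬ G.Adj (f 0) (f (Fin.last k)) ∨ ∀ i j : Fin (k + 1), i < j → O.adj (f i) (f j)

end SimpleGraph.Orientation

/-- A graph is semi-transitive if it admits a semi-transitive orientation. -/
def SimpleGraph.SemiTransitive {V : Type*} (G : SimpleGraph V) : Prop :=
  ∃ O : G.Orientation, O.SemiTransitive

/-- The Kneser graph `K(n,k)`: vertices are the `k`-element subsets of an
`n`-element set, two vertices adjacent iff the corresponding sets are disjoint. -/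
def kneserGraph (n k : ℕ) : SimpleGraph {s : Finset (Fin n) // s.card = k} where
  Adj A B := A ≠ B ∧ Disjoint A.val B.val
  symm := by
    constructor
    rintro A B ⟨h1, h2⟩
    exact ⟨h1.symm, h2.symm⟩
  loopless := by
    constructor
    rintro A ⟨h1, _⟩
    exact h1 rfl

/-!
Gallai–Roy: label each vertex `v` by the length of the longest directed walk starting at `v`.
Along an edge `u → v` a walk from `v` extends to one from `u`, so the label strictly drops and the
labelling is a proper colouring. If there were no directed walk on `m` vertices, it would use fewer
than `m` colours.
-/

namespace SimpleGraph.Orientation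

variable {V : Type*} {G : SimpleGraph V} (O : G.Orientation)

variable {O} in
theorem IsDipath.cons {k : ℕ} {f : Fin (k + 1) → V} {u : V} (hf : O.IsDipath f)
    (hu : O.adj u (f 0)) : O.IsDipath (Fin.cons u f : Fin (k + 2) → V) := by
  intro i
  refine Fin.cases ?_ (fun i => ?_) i
  · simpa using hu
  · simpa [Fin.castSucc_succ] using hf i

section DipathLength

open Classical

/-- The length of a longest directed walk starting at `v`, where lengths are capped at `k`. -/
noncomputable def dipathLength (k : ℕ) (v : V) : ℕ :=
  Nat.findGreatest (fun n => ∃ f : Fin (n + 1) → V, f 0 = v ∧ O.IsDipath f) k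

theorem exists_isDipath_dipathLength (k : ℕ) (v : V) :
    ∃ f : Fin (O.dipathLength k v + 1) → V, f 0 = v ∧ O.IsDipath f :=
  Nat.findGreatest_spec (P := fun n => ∃ f : Fin (n + 1) → V, f 0 = v ∧ O.IsDipath f)
    (Nat.zero_le k) ⟨fun _ => v, rfl, fun i => i.elim0⟩

variable {O} {k : ℕ}

theorem dipathLength_lt (h : ∀ f : Fin (k + 1) → V, ¬ O.IsDipath f) (v : V) :
    O.dipathLength k v < k := by
  obtain ⟨f, -, hf⟩ := O.exists_isDipath_dipathLength k v
  refine lt_of_le_of_ne (Nat.findGreatest_le k) fun hk => ?_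
  rw [← hk] at h
  exact h f hf

theorem dipathLength_lt_of_adj (h : ∀ f : Fin (k + 1) → V, ¬ O.IsDipath f) {u v : V}
    (huv : O.adj u v) : O.dipathLength k v < O.dipathLength k u := by
  obtain ⟨f, hf0, hf⟩ := O.exists_isDipath_dipathLength k v
  exact Nat.lt_of_succ_le <| Nat.le_findGreatest (dipathLength_lt h v)
    ⟨Fin.cons u f, rfl, hf.cons (by rwa [hf0])⟩

end DipathLength

theorem colorable_of_forall_not_isDipath {k : ℕ} (h : ∀ f : Fin (k + 1) → V, ¬ O.IsDipath f) :
    G.Colorable k :=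
  ⟨Coloring.mk (fun v => ⟨O.dipathLength k v, dipathLength_lt h v⟩) fun huv heq => by
    rcases O.choice huv with huv | hvu
    · exact (dipathLength_lt_of_adj h huv).ne (Fin.val_eq_of_eq heq).symm
    · exact (dipathLength_lt_of_adj h hvu).ne (Fin.val_eq_of_eq heq)⟩

end SimpleGraph.Orientation

theorem chromatic_gives_long_dipath_general {V : Type*} (G : SimpleGraph V)
    (m : ℕ) (hm : G.chromaticNumber = m) (O : G.Orientation) :
    ∃ f : Fin m → V, ∀ (i : ℕ) (hi : i + 1 < m),
      O.adj (f ⟨i, Nat.lt_of_succ_lt hi⟩) (f ⟨i + 1, hi⟩) := by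
  cases m with
  | zero => exact ⟨Fin.elim0, fun i hi => by omega⟩
  | succ k =>
    obtain ⟨f, hf⟩ : ∃ f : Fin (k + 1) → V, O.IsDipath f := by
      by_contra! h
      have hle := (O.colorable_of_forall_not_isDipath h).chromaticNumber_le
      rw [hm, ENat.natCast_le_natCast] at hle
      omega
    exact ⟨f, fun i hi => hf ⟨i, by omega⟩⟩

/-- A finite graph with chromatic number `m`, acyclically oriented,
contains a directed path on `m` vertices. -/
theorem chromatic_gives_long_dipath {V : Type*} [Fintype V] (G : SimpleGraph V)
    (m : ℕ) (hm : G.chromaticNumber = m) (O : G.Orientation) (hO : O.Acyclic) :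
    ∃ f : Fin m → V, ∀ (i : ℕ) (hi : i + 1 < m),
      O.adj (f ⟨i, Nat.lt_of_succ_lt hi⟩) (f ⟨i + 1, hi⟩) :=
  chromatic_gives_long_dipath_general G m hm O
end

section
/- Let G be a finite simple graph equipped with a semi-transitive (i.e., acyclic and shortcut-free) orientation →, and let a, b, c, d be four distinct vertices such that ab, bc, cd, da are all edges of G, the edges ab and bc are oriented as a→b and b→c, and the subgraph induced by {a,b,c,d} is not a complete graph K_4 (i.e., at least one of the pairs {a,c}, {b,d} is a non-edge of G). Then the edges da and cd are oriented as a→d and d→c. -/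
/-! Reversing `d a` or `c d` closes a directed path on three edges whose ends are adjacent, so
semi-transitivity forces both chords `a c` and `b d`, i.e. a `K₄`. -/

namespace SimpleGraph.Orientation.SemiTransitive

variable {V : Type*} {G : SimpleGraph V} {O : G.Orientation}

theorem chords_of_path_three (hO : O.SemiTransitive) {w x y z : V}
    (hwx : O.adj w x) (hxy : O.adj x y) (hyz : O.adj y z) (hwz : G.Adj w z) :
    O.adj w y ∧ O.adj x z := by
  have hpath : O.IsDipath ![w, x, y, z] := by
    intro i
    fin_cases i <;> assumption
  rcases hO.2 3 ![w, x, y, z] hpath with hnadj | htrans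
  · exact absurd hwz hnadj
  · exact ⟨htrans 0 2 (by decide), htrans 1 3 (by decide)⟩

end SimpleGraph.Orientation.SemiTransitive

theorem cycle_orientation_forced_general {V : Type*} (G : SimpleGraph V)
    (O : G.Orientation) (hO : O.SemiTransitive) (a b c d : V)
    (hcd : G.Adj c d) (hda : G.Adj d a)
    (oab : O.adj a b) (obc : O.adj b c)
    (hnotK4 : ¬ G.Adj a c ∨ ¬ G.Adj b d) :
    O.adj a d ∧ O.adj d c := by
  refine ⟨(O.choice hda.symm).resolve_right fun oda => ?_,
    (O.choice hcd.symm).resolve_right fun ocd => ?_⟩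
  · obtain ⟨odb, oac⟩ := hO.chords_of_path_three oda oab obc hcd.symm
    exact hnotK4.elim (· (O.adj_sub oac)) (· (O.adj_sub odb).symm)
  · obtain ⟨oac, obd⟩ := hO.chords_of_path_three oab obc ocd hda.symm
    exact hnotK4.elim (· (O.adj_sub oac)) (· (O.adj_sub obd))

/-- In a semi-transitively oriented graph, a 4-cycle `a b c d`
that is not a `K₄`, with `a → b` and `b → c`, must have `a → d` and `d → c`. -/
theorem cycle_orientation_forced {V : Type*} [Fintype V] (G : SimpleGraph V)
    (O : G.Orientation) (hO : O.SemiTransitive) (a b c d : V)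
    (hab' : a ≠ b) (hac' : a ≠ c) (had' : a ≠ d) (hbc' : b ≠ c) (hbd' : b ≠ d)
    (hcd' : c ≠ d)
    (hab : G.Adj a b) (hbc : G.Adj b c) (hcd : G.Adj c d) (hda : G.Adj d a)
    (oab : O.adj a b) (obc : O.adj b c)
    (hnotK4 : ¬ G.Adj a c ∨ ¬ G.Adj b d) :
    O.adj a d ∧ O.adj d c :=
  cycle_orientation_forced_general G O hO a b c d hcd hda oab obc hnotK4
end

section
/- For all integers k ≥ 1 and n with k ≤ n ≤ 2k+1, the Kneser graph K(n,k) is semi-transitive. -/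
/-!
Colour a `k`-subset of `Fin n` by its least element when that is `0` or `1`, and by `2`
otherwise. Two disjoint sets of colour `2` would fill `2k` of the `n - 2 ≤ 2k - 1`
remaining points, so this is a proper `3`-colouring. Orienting every edge towards the larger
colour then gives an acyclic orientation without directed paths of length `3`, and such an
orientation is semi-transitive: the only shortcut to check is `v₀ → v₂` on a path
`v₀ → v₁ → v₂`, and the reverse edge would close a directed triangle.
-/

namespace SimpleGraph.Orientation

variable {V : Type*} {G : SimpleGraph V}

theorem semiTransitive_of_forall_isDipath_le_two (O : G.Orientation) (hO : O.Acyclic)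
    (hlen : ∀ (k : ℕ) (f : Fin (k + 1) → V), O.IsDipath f → k ≤ 2) : O.SemiTransitive := by
  refine ⟨hO, fun k f hf => ?_⟩
  match k, hlen k f hf with
  | 0, _ => exact Or.inl G.irrefl
  | 1, _ =>
    refine Or.inr fun i j hij => ?_
    fin_cases i <;> fin_cases j <;> first | exact absurd hij (by decide) | exact hf 0
  | 2, _ =>
    by_cases hadj : G.Adj (f 0) (f 2)
    · have h02 : O.adj (f 0) (f 2) := (O.choice hadj).resolve_right fun h20 =>
        hO (f 0) (.tail (.tail (.single (hf 0)) (hf 1)) h20)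
      have h01 : O.adj (f 0) (f 1) := hf 0
      have h12 : O.adj (f 1) (f 2) := hf 1
      refine Or.inr fun i j hij => ?_
      fin_cases i <;> fin_cases j <;>
        first | exact absurd hij (by decide) | exact h01 | exact h12 | exact h02
    · exact Or.inl hadj

def ofColoring {α : Type*} [LinearOrder α] (C : G.Coloring α) : G.Orientation where
  adj u v := G.Adj u v ∧ C u < C v
  adj_sub h := h.1
  choice h := (C.valid h).lt_or_gt.imp (⟨h, ·⟩) (⟨h.symm, ·⟩)
  asymm h h' := lt_asymm h.2 h'.2

variable {α : Type*} [LinearOrder α] (C : G.Coloring α)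

theorem ofColoring_acyclic : (ofColoring C).Acyclic := fun v hv => by
  have h := Relation.TransGen.lift C (p := (· < ·)) (fun _ _ h => h.2) _ _ hv
  rw [Relation.transGen_eq_self] at h
  exact lt_irrefl _ h

theorem ofColoring_isDipath_strictMono {k : ℕ} {f : Fin (k + 1) → V}
    (hf : (ofColoring C).IsDipath f) : StrictMono (C ∘ f) :=
  Fin.strictMono_iff_lt_succ.mpr fun i => (hf i).2

end SimpleGraph.Orientation

theorem SimpleGraph.Colorable.semiTransitive {V : Type*} {G : SimpleGraph V}
    (hG : G.Colorable 3) : G.SemiTransitive := by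
  obtain ⟨C⟩ := hG
  refine ⟨_, Orientation.semiTransitive_of_forall_isDipath_le_two _ (Orientation.ofColoring_acyclic C)
    fun k f hf => ?_⟩
  have := Fin.le_of_injective _ (Orientation.ofColoring_isDipath_strictMono C hf).injective
  omega

section KneserColoring

variable {n : ℕ} (m : ℕ)

def kneserColor (s : Finset (Fin n)) : ℕ :=
  (insert m (s.map Fin.valEmbedding)).min' (Finset.insert_nonempty _ _)

variable {m}

theorem kneserColor_le (s : Finset (Fin n)) : kneserColor m s ≤ m :=
  Finset.min'_le _ _ (Finset.mem_insert_self _ _)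

theorem kneserColor_le_val {s : Finset (Fin n)} {a : Fin n} (ha : a ∈ s) :
    kneserColor m s ≤ a :=
  Finset.min'_le _ _ (Finset.mem_insert_of_mem (Finset.mem_map_of_mem _ ha))

theorem exists_val_eq_kneserColor {s : Finset (Fin n)} (h : kneserColor m s < m) :
    ∃ a ∈ s, (a : ℕ) = kneserColor m s :=
  Finset.mem_map.mp <| (Finset.mem_insert.mp (Finset.min'_mem _ _)).resolve_left h.ne

theorem kneserColor_ne_of_disjoint {s t : Finset (Fin n)} (hne : s ≠ t) (hst : Disjoint s t)
    (hcard : n < s.card + t.card + m) : kneserColor m s ≠ kneserColor m t := by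
  intro hc
  rcases (kneserColor_le s).lt_or_eq with hlt | hm
  · obtain ⟨a, ha, hac⟩ := exists_val_eq_kneserColor hlt
    obtain ⟨b, hb, hbc⟩ := exists_val_eq_kneserColor (hc ▸ hlt)
    obtain rfl : a = b := Fin.ext (hac.trans (hc.trans hbc.symm))
    exact Finset.disjoint_left.mp hst ha hb
  · have hsub : (s ∪ t).map Fin.valEmbedding ⊆ Finset.Ico m n := by
      intro x hx
      obtain ⟨a, ha, rfl⟩ := Finset.mem_map.mp hx
      rcases Finset.mem_union.mp ha with ha | ha
      · exact Finset.mem_Ico.mpr ⟨hm ▸ kneserColor_le_val ha, a.2⟩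
      · exact Finset.mem_Ico.mpr ⟨hm ▸ hc ▸ kneserColor_le_val ha, a.2⟩
    -- a point of `s ∪ t` gives `m < n`, so the truncated `n - m` below is honest
    obtain ⟨a, ha⟩ : (s ∪ t).Nonempty := Finset.nonempty_iff_ne_empty.mpr fun h =>
      hne ((Finset.union_eq_empty.mp h).1.trans (Finset.union_eq_empty.mp h).2.symm)
    have hmn := Finset.mem_Ico.mp (hsub (Finset.mem_map_of_mem _ ha))
    have hle := Finset.card_le_card hsub
    rw [Finset.card_map, Finset.card_union_of_disjoint hst, Nat.card_Ico] at hle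
    omega

end KneserColoring

theorem kneserGraph_colorable_of_lt {n k m : ℕ} (h : n < 2 * k + m) :
    (kneserGraph n k).Colorable (m + 1) :=
  (SimpleGraph.colorable_iff_exists_bdd_nat_coloring _).mpr
    ⟨.mk (fun A => kneserColor m A.1) fun {A B} hAB =>
      kneserColor_ne_of_disjoint (Subtype.coe_ne_coe.mpr hAB.1) hAB.2 (by rw [A.2, B.2]; omega),
     fun A => Nat.lt_succ_of_le (kneserColor_le _)⟩

theorem kneser_semiTransitive_of_le_general (n k : ℕ)
    (hn : n ≤ 2 * k + 1) : (kneserGraph n k).SemiTransitive :=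
  (kneserGraph_colorable_of_lt (m := 2) (by omega)).semiTransitive

/-- For `k ≥ 1` and `k ≤ n ≤ 2k + 1`, `K(n,k)` is semi-transitive. -/
theorem kneser_semiTransitive_of_le (n k : ℕ) (hk : 1 ≤ k) (hkn : k ≤ n)
    (hn : n ≤ 2 * k + 1) : (kneserGraph n k).SemiTransitive :=
  kneser_semiTransitive_of_le_general n k hn
end

section
/- For every integer k ≥ 2, the Kneser graph K(6,2) is isomorphic to an induced subgraph of the Kneser graph K(15k−24, k). -/
/-!
Give each of the 15 vertices `A` of `K(6,2)` its own block of `k - 2` fresh points and send `A`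
to `A` together with its block: a `k`-set in a ground set of size `6 + 15 (k - 2) = 15k - 24`.
Private blocks of distinct vertices are disjoint, so two images are disjoint exactly when the
original pairs are.
-/

open Finset

theorem Finset.disjoint_disjSum_disjSum {α β : Type*} {s s' : Finset α} {t t' : Finset β} :
    Disjoint (s.disjSum t) (s'.disjSum t') ↔ Disjoint s s' ∧ Disjoint t t' := by
  simp only [disjoint_left, Sum.forall, inl_mem_disjSum, inr_mem_disjSum]

namespace kneserGraph

variable {m j k n : ℕ}

def pad (k : ℕ) (A : {s : Finset (Fin m) // s.card = j}) :
    Finset (Fin m ⊕ {s : Finset (Fin m) // s.card = j} × Fin (k - j)) :=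
  A.val.disjSum ({A} ×ˢ univ)

theorem card_pad (hjk : j ≤ k) (A : {s : Finset (Fin m) // s.card = j}) :
    (pad k A).card = k := by
  rw [pad, card_disjSum, card_product, card_singleton, card_univ, Fintype.card_fin, A.2]
  omega

theorem pad_injective : Function.Injective (pad (m := m) (j := j) k) := fun _ _ h =>
  Subtype.ext (disjSum_inj.mp h).1

theorem disjoint_pad_iff {A B : {s : Finset (Fin m) // s.card = j}} (hAB : A ≠ B) :
    Disjoint (pad k A) (pad k B) ↔ Disjoint A.val B.val := by
  have hblocks : Disjoint ({A} ×ˢ (univ : Finset (Fin (k - j)))) ({B} ×ˢ univ) :=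
    disjoint_product.mpr (Or.inl (disjoint_singleton.mpr hAB))
  simp only [pad, disjoint_disjSum_disjSum, hblocks, and_true]

section

variable (hjk : j ≤ k) (g : Fin m ⊕ {s : Finset (Fin m) // s.card = j} × Fin (k - j) ↪ Fin n)

def padMap (A : {s : Finset (Fin m) // s.card = j}) : {s : Finset (Fin n) // s.card = k} :=
  ⟨(pad k A).map g, by rw [card_map, card_pad hjk]⟩

theorem padMap_injective : Function.Injective (padMap hjk g) := fun _ _ h =>
  pad_injective (map_injective g (congrArg Subtype.val h))

def padEmbedding : kneserGraph m j ↪g kneserGraph n k where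
  toFun := padMap hjk g
  inj' := padMap_injective hjk g
  map_rel_iff' {A B} := by
    change (padMap hjk g A ≠ padMap hjk g B ∧ Disjoint ((pad k A).map g) ((pad k B).map g)) ↔
      (A ≠ B ∧ Disjoint A.val B.val)
    rw [(padMap_injective hjk g).ne_iff, disjoint_map]
    exact and_congr_right disjoint_pad_iff

end

theorem nonempty_embedding (hjk : j ≤ k) (hn : m + m.choose j * (k - j) ≤ n) :
    Nonempty (kneserGraph m j ↪g kneserGraph n k) := by
  obtain ⟨g⟩ := Function.Embedding.nonempty_of_card_le
    (α := Fin m ⊕ {s : Finset (Fin m) // s.card = j} × Fin (k - j)) (β := Fin n)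
    (by simpa [Fintype.card_finset_len] using hn)
  exact ⟨padEmbedding hjk g⟩

end kneserGraph

/-- For `k ≥ 2`, `K(6,2)` is isomorphic to an induced subgraph of
`K(15k − 24, k)`. -/
theorem kneser_6_2_embeds (k : ℕ) (hk : 2 ≤ k) :
    ∃ S : Set {s : Finset (Fin (15 * k - 24)) // s.card = k},
      Nonempty ((kneserGraph 6 2) ≃g ((kneserGraph (15 * k - 24) k).induce S)) := by
  have hchoose : (6 : ℕ).choose 2 = 15 := rfl
  obtain ⟨f⟩ := kneserGraph.nonempty_embedding (n := 15 * k - 24) hk (by rw [hchoose]; omega)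
  exact ⟨_, ⟨f.isoInduceRange⟩⟩
end

section
/- For all integers k ≥ 1 and n with k ≤ n ≤ 2k, the complement graph of the Kneser graph K(n,k) is semi-transitive. -/
/-! For `n ≤ 2k` two `k`-sets are disjoint only if they are complementary, so the complement of
`K(n,k)` is a complete graph minus the pairs `{s, sᶜ}`. Orient it along a ranking of the vertices
in which `s` and `sᶜ` are always neighbours. A directed path then has increasing ranks, and two of
its vertices that are non-adjacent would have no rank strictly between them, so they would be
consecutive on the path and joined by one of its edges. Hence the orientation is semi-transitive. -/

namespace SimpleGraph

variable {V α : Type*} [LinearOrder α]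

def orientationOfRank (G : SimpleGraph V) (r : V → α) (hr : Function.Injective r) :
    G.Orientation where
  adj u v := G.Adj u v ∧ r u < r v
  adj_sub h := h.1
  choice h := (lt_or_gt_of_ne (hr.ne h.ne)).imp (⟨h, ·⟩) (⟨h.symm, ·⟩)
  asymm h h' := lt_asymm h.2 h'.2

variable {G : SimpleGraph V} {r : V → α} (hr : Function.Injective r)
include hr

theorem orientationOfRank_acyclic : (G.orientationOfRank r hr).Acyclic := fun v hv =>
  lt_irrefl (r v) <|
    Relation.transGen_minimal (r' := Function.onFun (· < ·) r) (fun _ _ h => h.2) v v hv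

theorem orientationOfRank_semiTransitive
    (hgap : ∀ u v w, r u < r w → r w < r v → G.Adj u v) :
    (G.orientationOfRank r hr).SemiTransitive := by
  refine ⟨orientationOfRank_acyclic hr, fun m f hf => Or.inr fun i j hij => ?_⟩
  have hmono : StrictMono (r ∘ f) := Fin.strictMono_iff_lt_succ.2 fun i => (hf i).2
  refine ⟨?_, hmono hij⟩
  obtain ⟨p, rfl⟩ : ∃ p : Fin m, p.castSucc = i := ⟨⟨i, by omega⟩, rfl⟩
  rcases (Fin.castSucc_lt_iff_succ_le.1 hij).eq_or_lt with rfl | hj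
  · exact (hf p).1
  · exact hgap _ _ _ (hmono Fin.castSucc_lt_succ) (hmono hj)

end SimpleGraph

section PairedRank

variable {β α : Type*} [LinearOrder α] (e : β → α) (σ : β → β)

/-- `x` and `σ x` share the first coordinate, so nothing is ranked strictly between them. -/
def pairedRank (x : β) : α ×ₗ α := toLex (min (e x) (e (σ x)), e x)

variable {e σ}

theorem pairedRank_injective (he : Function.Injective e) :
    Function.Injective (pairedRank e σ) :=
  fun _ _ h => he (congrArg (·.2) (toLex.injective h))

theorem not_pairedRank_between (he : Function.Injective e) (hσ : Function.Involutive σ)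
    (x w : β) (h₁ : pairedRank e σ x < pairedRank e σ w)
    (h₂ : pairedRank e σ w < pairedRank e σ (σ x)) : False := by
  simp only [pairedRank, hσ x, Prod.Lex.toLex_lt_toLex, min_comm (e (σ x))] at h₁ h₂
  have hfst : min (e w) (e (σ w)) = min (e x) (e (σ x)) := by grind
  have hw : w = x ∨ w = σ x := by grind [he.eq_iff, hσ w]
  rcases hw with rfl | rfl <;> grind

end PairedRank

theorem Finset.eq_compl_of_disjoint_of_card_le_add {ι : Type*} [Fintype ι] [DecidableEq ι]
    {s t : Finset ι} (hst : Disjoint s t) (hcard : Fintype.card ι ≤ s.card + t.card) : t = sᶜ :=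
  Finset.eq_of_subset_of_card_le (Finset.subset_compl_iff_disjoint_left.2 hst)
    (by rw [Finset.card_compl]; omega)

theorem kneserGraph.eq_compl_of_adj {n k : ℕ} (hn : n ≤ 2 * k)
    {A B : {s : Finset (Fin n) // s.card = k}} (h : (kneserGraph n k).Adj A B) :
    B.val = A.valᶜ :=
  Finset.eq_compl_of_disjoint_of_card_le_add h.2 (by rw [A.2, B.2, Fintype.card_fin]; omega)

theorem kneser_compl_semiTransitive_general (n k : ℕ) (hn : n ≤ 2 * k) :
    ((kneserGraph n k)ᶜ).SemiTransitive := by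
  let r (A : {s : Finset (Fin n) // s.card = k}) : ℕ ×ₗ ℕ :=
    pairedRank Encodable.encode compl A.val
  have hr : Function.Injective r :=
    (pairedRank_injective Encodable.encode_injective).comp Subtype.val_injective
  refine ⟨_, SimpleGraph.orientationOfRank_semiTransitive hr fun A B W hAW hWB => ?_⟩
  refine (SimpleGraph.compl_adj _ _ _).2
    ⟨fun hAB => (hAW.trans hWB).ne (congrArg r hAB), fun hAB => ?_⟩
  simp only [r, kneserGraph.eq_compl_of_adj hn hAB] at hWB
  exact not_pairedRank_between Encodable.encode_injective compl_involutive _ _ hAW hWB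

/-- For `k ≥ 1` and `k ≤ n ≤ 2k`, the complement of `K(n,k)` is
semi-transitive. -/
theorem kneser_compl_semiTransitive (n k : ℕ) (hk : 1 ≤ k) (hkn : k ≤ n)
    (hn : n ≤ 2 * k) : ((kneserGraph n k)ᶜ).SemiTransitive :=
  kneser_compl_semiTransitive_general n k hn
end

section
/- For all integers k ≥ 2 and n ≥ k, the complement graph of the Kneser graph K(n,k) is semi-transitive if and only if n ≤ 2k. -/
open Function Finset

namespace SimpleGraph

variable {V α : Type*} [LinearOrder α] {G : SimpleGraph V}

/-- Semi-transitivity of the orientation of `G` by increasing `r`, restricted to directed paths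
on four vertices. -/
def NoFourVertexShortcut (G : SimpleGraph V) (r : V → α) : Prop :=
  ∀ ⦃a b c d⦄, r a < r b → r b < r c → r c < r d →
    G.Adj a b → G.Adj b c → G.Adj c d → G.Adj a d → G.Adj a c ∧ G.Adj b d

namespace Orientation

def ofRanking (G : SimpleGraph V) (r : V → α) (hr : Injective r) : G.Orientation where
  adj u v := G.Adj u v ∧ r u < r v
  adj_sub h := h.1
  choice h := (hr.ne h.ne).lt_or_gt.imp (⟨h, ·⟩) (⟨h.symm, ·⟩)
  asymm h h' := h.2.asymm h'.2

theorem semiTransitive_of_trans (O : G.Orientation)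
    (htrans : ∀ ⦃u v w⦄, O.adj u v → O.adj v w → O.adj u w) : O.SemiTransitive := by
  have : IsTrans V O.adj := ⟨htrans⟩
  refine ⟨fun v hv => ?_, fun k f hf => Or.inr fun i j hij => (Fin.liftFun_iff_succ O.adj).2 hf hij⟩
  rw [Relation.transGen_eq_self] at hv
  exact O.asymm hv hv

theorem Acyclic.exists_ranking [Finite V] {O : G.Orientation} (hO : O.Acyclic) :
    ∃ r : V → ℕ ×ₗ ℕ, Injective r ∧ ∀ ⦃u v⦄, O.adj u v → r u < r v := by
  obtain ⟨e, he⟩ := Countable.exists_injective_nat V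
  refine ⟨fun v => toLex ({u | Relation.TransGen O.adj u v}.ncard, e v),
    fun u v h => he (congrArg (fun p => (ofLex p).2) h), fun u v h => ?_⟩
  refine Prod.Lex.toLex_lt_toLex.2 (Or.inl (Set.ncard_lt_ncard ⟨fun w hw => hw.tail h, ?_⟩))
  exact fun hsub => hO u (hsub (Relation.TransGen.single h))

theorem SemiTransitive.noFourVertexShortcut {O : G.Orientation} (hO : O.SemiTransitive)
    {r : V → α} (hr : ∀ ⦃u v⦄, O.adj u v → r u < r v) : G.NoFourVertexShortcut r := by
  have orient ⦃u v : V⦄ (h : G.Adj u v) (huv : r u < r v) : O.adj u v :=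
    (O.choice h).resolve_right fun hvu => (hr hvu).asymm huv
  intro a b c d hab hbc hcd Aab Abc Acd Aad
  have hpath : O.IsDipath ![a, b, c, d] := by
    intro i
    fin_cases i
    exacts [orient Aab hab, orient Abc hbc, orient Acd hcd]
  rcases hO.2 3 _ hpath with h | h
  · exact absurd Aad h
  · exact ⟨O.adj_sub (h 0 2 (by decide)), O.adj_sub (h 1 3 (by decide))⟩

end Orientation

theorem SemiTransitive.exists_ranking [Finite V] (h : G.SemiTransitive) :
    ∃ r : V → ℕ ×ₗ ℕ, Injective r ∧ G.NoFourVertexShortcut r := by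
  obtain ⟨O, hO⟩ := h
  obtain ⟨r, hr, hOr⟩ := hO.1.exists_ranking
  exact ⟨r, hr, hO.noFourVertexShortcut hOr⟩

theorem semiTransitive_compl_of_adj_unique [Countable V] {H : SimpleGraph V}
    (hH : ∀ ⦃u v w⦄, H.Adj u v → H.Adj u w → v = w) : Hᶜ.SemiTransitive := by
  classical
  obtain ⟨e, he⟩ := Countable.exists_injective_nat V
  let mate (u : V) : V := if h : ∃ v, H.Adj u v then h.choose else u
  have mate_eq ⦃u v : V⦄ (h : H.Adj u v) : mate u = v := by
    have hex : ∃ v, H.Adj u v := ⟨v, h⟩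
    simpa only [mate, dif_pos hex] using hH hex.choose_spec h
  have adj_mate ⦃u : V⦄ (h : mate u ≠ u) : H.Adj u (mate u) := by
    by_cases hex : ∃ v, H.Adj u v
    · simpa only [mate, dif_pos hex] using hex.choose_spec
    · simp only [mate, dif_neg hex, ne_eq, not_true_eq_false] at h
  -- Ranking by the pair `{u, mate u}` first makes every non-edge of `Hᶜ` consecutive.
  let r (u : V) : ℕ ×ₗ ℕ := toLex (min (e u) (e (mate u)), e u)
  have hr : Injective r := fun u v h => he (congrArg (fun p => (ofLex p).2) h)
  have fst_le ⦃u v : V⦄ (h : r u < r v) : (ofLex (r u)).1 ≤ (ofLex (r v)).1 :=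
    (Prod.Lex.lt_iff.1 h).elim le_of_lt fun h => h.1.le
  refine ⟨Orientation.ofRanking _ r hr, Orientation.semiTransitive_of_trans _ ?_⟩
  rintro u w v ⟨huw, ruw⟩ ⟨hwv, rwv⟩
  refine ⟨(compl_adj _ _ _).2 ⟨hr.ne_iff.1 (ruw.trans rwv).ne, fun huv => ?_⟩, ruw.trans rwv⟩
  have hmin : min (e w) (e (mate w)) = min (e u) (e v) := by
    have h₁ := fst_le ruw
    have h₂ := fst_le rwv
    simp only [r, ofLex_toLex, mate_eq huv, mate_eq huv.symm] at h₁ h₂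
    omega
  have hw_ne : ∀ x, x = u ∨ x = v → x ≠ w := by
    rintro x (rfl | rfl) rfl
    exacts [ruw.ne rfl, rwv.ne rfl]
  have of_eq_min ⦃x : V⦄ (hx : e x = min (e u) (e v)) : x = u ∨ x = v := by
    rcases min_choice (e u) (e v) with h | h <;> rw [h] at hx
    exacts [.inl (he hx), .inr (he hx)]
  rcases min_choice (e w) (e (mate w)) with h | h <;> rw [h] at hmin
  · exact hw_ne w (of_eq_min hmin) rfl
  · have hx := of_eq_min hmin
    have adj := adj_mate (hw_ne _ hx)
    rcases hx with hx | hx <;> rw [hx] at adj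
    exacts [huw.2 adj.symm, hwv.2 adj]

variable {r : V → α}

/-- The configuration `P₀, P₁, P₂, B` of the module docstring, with `X₁` as `exists_mid`. -/
structure ShortcutFrame (G : SimpleGraph V) (r : V → α) (p₀ p₁ p₂ b : V) : Prop where
  lt₀₁ : r p₀ < r p₁
  lt₁₂ : r p₁ < r p₂
  adj₀₁ : G.Adj p₀ p₁
  adj₁₂ : G.Adj p₁ p₂
  adj₀₂ : G.Adj p₀ p₂
  le_top : ∀ v, r v ≤ r b
  not_adj₀ : ¬G.Adj p₀ b
  not_adj₂ : ¬G.Adj p₂ b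
  exists_mid : ∃ x, G.Adj x p₀ ∧ G.Adj x p₂ ∧ ¬G.Adj x p₁ ∧ G.Adj x b

namespace ShortcutFrame

variable {p₀ p₁ p₂ b x d : V}

theorem lt_top (hr : Injective r) (F : G.ShortcutFrame r p₀ p₁ p₂ b) (hd : G.Adj d b) :
    r d < r b :=
  (F.le_top d).lt_of_ne (hr.ne hd.ne)

theorem lt_and_lt_of_not_adj₁ (hr : Injective r) (hG : G.NoFourVertexShortcut r)
    (F : G.ShortcutFrame r p₀ p₁ p₂ b) (h₀ : G.Adj x p₀) (h₂ : G.Adj x p₂) (h₁ : ¬G.Adj x p₁) :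
    r p₀ < r x ∧ r x < r p₂ :=
  ⟨(not_lt.1 fun h => h₁ (hG h F.lt₀₁ F.lt₁₂ h₀ F.adj₀₁ F.adj₁₂ h₂).1).lt_of_ne (hr.ne h₀.ne'),
    (not_lt.1 fun h => h₁ (hG F.lt₀₁ F.lt₁₂ h F.adj₀₁ F.adj₁₂ h₂.symm h₀.symm).2.symm).lt_of_ne
      (hr.ne h₂.ne)⟩

theorem lt_of_adj₀ (hr : Injective r) (hG : G.NoFourVertexShortcut r)
    (F : G.ShortcutFrame r p₀ p₁ p₂ b) (h₀ : G.Adj d p₀) (hb : G.Adj d b) : r p₀ < r d := by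
  obtain ⟨x, hx₀, hx₂, hx₁, hxb⟩ := F.exists_mid
  refine (not_lt.1 fun h => F.not_adj₀ ?_).lt_of_ne (hr.ne fun h => F.not_adj₀ (h ▸ hb))
  exact (hG h (F.lt_and_lt_of_not_adj₁ hr hG hx₀ hx₂ hx₁).1 (F.lt_top hr hxb)
    h₀ hx₀.symm hxb hb).2

theorem lt_of_adj₂ (hr : Injective r) (hG : G.NoFourVertexShortcut r)
    (F : G.ShortcutFrame r p₀ p₁ p₂ b) (h₂ : G.Adj d p₂) (hb : G.Adj d b) : r d < r p₂ := by
  obtain ⟨x, hx₀, hx₂, hx₁, hxb⟩ := F.exists_mid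
  refine (not_lt.1 fun h => F.not_adj₂ ?_).lt_of_ne (hr.ne fun h => F.not_adj₂ (h ▸ hb))
  exact (hG (F.lt_and_lt_of_not_adj₁ hr hG hx₀ hx₂ hx₁).2 h (F.lt_top hr hb)
    hx₂ h₂.symm hb hxb).2

theorem lt_of_not_adj₂ (hr : Injective r) (hG : G.NoFourVertexShortcut r)
    (F : G.ShortcutFrame r p₀ p₁ p₂ b) (h₀ : G.Adj x p₀) (h₁ : G.Adj x p₁)
    (h₂ : ¬G.Adj x p₂) (hb : G.Adj x b) : r p₁ < r x :=
  (not_lt.1 fun h => h₂ (hG (F.lt_of_adj₀ hr hG h₀ hb) h F.lt₁₂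
    h₀.symm h₁ F.adj₁₂ F.adj₀₂).2).lt_of_ne (hr.ne h₁.ne')

theorem lt_of_not_adj₀ (hr : Injective r) (hG : G.NoFourVertexShortcut r)
    (F : G.ShortcutFrame r p₀ p₁ p₂ b) (h₁ : G.Adj x p₁) (h₂ : G.Adj x p₂)
    (h₀ : ¬G.Adj x p₀) (hb : G.Adj x b) : r x < r p₁ :=
  (not_lt.1 fun h => h₀ (hG F.lt₀₁ h (F.lt_of_adj₂ hr hG h₂ hb)
    F.adj₀₁ h₁.symm h₂ F.adj₀₂).1.symm).lt_of_ne (hr.ne h₁.ne)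

theorem lt_of_not_adj_of_not_adj₀ (hr : Injective r) (hG : G.NoFourVertexShortcut r)
    (F : G.ShortcutFrame r p₀ p₁ p₂ b) (hx₁ : G.Adj x p₁) (hx₂ : G.Adj x p₂)
    (hx₀ : ¬G.Adj x p₀) (hxb : G.Adj x b) (hd₁ : G.Adj d p₁) (hdb : G.Adj d b)
    (hdx : ¬G.Adj d x) : r d < r p₁ :=
  (not_lt.1 fun h => hdx (hG (F.lt_of_not_adj₀ hr hG hx₁ hx₂ hx₀ hxb) h (F.lt_top hr hdb)
    hx₁ hd₁.symm hdb hxb).1.symm).lt_of_ne (hr.ne fun h => hdx (h ▸ hx₁.symm))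

theorem lt_of_not_adj_of_not_adj₂ (hr : Injective r) (hG : G.NoFourVertexShortcut r)
    (F : G.ShortcutFrame r p₀ p₁ p₂ b) (hx₀ : G.Adj x p₀) (hx₁ : G.Adj x p₁)
    (hx₂ : ¬G.Adj x p₂) (hxb : G.Adj x b) (hd₁ : G.Adj d p₁) (hdb : G.Adj d b)
    (hdx : ¬G.Adj d x) : r p₁ < r d :=
  (not_lt.1 fun h => hdx (hG h (F.lt_of_not_adj₂ hr hG hx₀ hx₁ hx₂ hxb) (F.lt_top hr hxb)
    hd₁ hx₁.symm hxb hdb).1).lt_of_ne (hr.ne fun h => hdx (h ▸ hx₁.symm))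

end ShortcutFrame

end SimpleGraph

theorem exists_lt_lt_of_injective {β α : Type*} [Fintype β] [LinearOrder α] {f : β → α}
    (hf : Injective f) (h : 2 < Fintype.card β) : ∃ a b c, f a < f b ∧ f b < f c := by
  classical
  have hs : (univ.image f).card = Fintype.card β := card_image_of_injective _ hf
  let g := (univ.image f).orderEmbOfFin hs
  have hg (i) : ∃ a, f a = g i :=
    let ⟨a, _, ha⟩ := mem_image.1 ((univ.image f).orderEmbOfFin_mem hs i); ⟨a, ha⟩
  obtain ⟨a, ha⟩ := hg ⟨0, by omega⟩
  obtain ⟨b, hb⟩ := hg ⟨1, by omega⟩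
  obtain ⟨c, hc⟩ := hg ⟨2, h⟩
  exact ⟨a, b, c, ha ▸ hb ▸ g.strictMono (by simp [Fin.lt_def]),
    hb ▸ hc ▸ g.strictMono (by simp [Fin.lt_def])⟩

section KneserGraph

variable {n k : ℕ} {u v : {s : Finset (Fin n) // s.card = k}}

theorem compl_kneserGraph_adj_of_mem {x y : Fin n} (hxu : x ∈ u.1) (hxv : x ∈ v.1)
    (hyu : y ∈ u.1) (hyv : y ∉ v.1) : (kneserGraph n k)ᶜ.Adj u v :=
  ⟨fun h => hyv (h ▸ hyu), fun h => disjoint_left.1 h.2 hxu hxv⟩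

theorem compl_kneserGraph_not_adj_of_disjoint (h : Disjoint u.1 v.1) :
    ¬(kneserGraph n k)ᶜ.Adj u v :=
  fun huv => huv.2 ⟨huv.1, h⟩

theorem kneserGraph_adj_unique (hn : n ≤ 2 * k) ⦃u v w : {s : Finset (Fin n) // s.card = k}⦄
    (hv : (kneserGraph n k).Adj u v) (hw : (kneserGraph n k).Adj u w) : v = w := by
  have eq_compl ⦃v⦄ (hv : (kneserGraph n k).Adj u v) : v.1 = univ \ u.1 := by
    refine eq_of_subset_of_card_le (subset_sdiff.2 ⟨subset_univ _, hv.2.symm⟩) ?_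
    rw [card_univ_sdiff, Fintype.card_fin, u.2, v.2]
    omega
  exact Subtype.ext ((eq_compl hv).trans (eq_compl hw).symm)

end KneserGraph

section KneserVertices

variable {n k : ℕ} {Q : Finset (Fin n)} {B : {s : Finset (Fin n) // s.card = k}}
  {q q' b b' : Fin n}

def eraseVertex (hQ : Q.card = k + 1) (hq : q ∈ Q) : {s : Finset (Fin n) // s.card = k} :=
  ⟨Q.erase q, by rw [card_erase_of_mem hq, hQ, add_tsub_cancel_right]⟩

def exchangeVertex (B : {s : Finset (Fin n) // s.card = k}) (hb : b ∈ B.1) (hq : q ∉ B.1) :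
    {s : Finset (Fin n) // s.card = k} :=
  ⟨insert q (B.1.erase b), by
    rw [card_insert_of_notMem fun h => hq (mem_of_mem_erase h), card_erase_of_mem hb, B.2,
      Nat.sub_add_cancel (B.2 ▸ card_pos.2 ⟨b, hb⟩)]⟩

theorem compl_kneserGraph_adj_exchangeVertex_self (hb : b ∈ B.1) (hq : q ∉ B.1)
    (hb' : b' ∈ B.1) (hbb' : b' ≠ b) : (kneserGraph n k)ᶜ.Adj (exchangeVertex B hb hq) B :=
  compl_kneserGraph_adj_of_mem (x := b') (y := q) (by simp [exchangeVertex, hbb', hb']) hb'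
    (by simp [exchangeVertex]) hq

variable (hQ : Q.card = k + 1)

theorem eraseVertex_injective : Injective fun q : Q => eraseVertex hQ q.2 :=
  fun a _ h => Subtype.ext ((erase_inj Q a.2).1 (congrArg Subtype.val h))

theorem compl_kneserGraph_adj_eraseVertex {q'' : Fin n} (hq : q ∈ Q) (hq' : q' ∈ Q)
    (hq'' : q'' ∈ Q) (hne : q ≠ q') (hne' : q'' ≠ q) (hne'' : q'' ≠ q') :
    (kneserGraph n k)ᶜ.Adj (eraseVertex hQ hq) (eraseVertex hQ hq') :=
  compl_kneserGraph_adj_of_mem (x := q'') (y := q') (by simp [eraseVertex, *])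
    (by simp [eraseVertex, *]) (by simp [eraseVertex, hne.symm, hq']) (by simp [eraseVertex])

theorem compl_kneserGraph_not_adj_eraseVertex (hQB : Disjoint Q B.1) (hq : q ∈ Q) :
    ¬(kneserGraph n k)ᶜ.Adj (eraseVertex hQ hq) B :=
  compl_kneserGraph_not_adj_of_disjoint (hQB.mono_left (erase_subset q Q))

theorem compl_kneserGraph_adj_exchangeVertex_eraseVertex_iff (hQB : Disjoint Q B.1)
    (hb : b ∈ B.1) (hb' : b' ∈ B.1) (hbb' : b' ≠ b) (hq : q ∈ Q) (hq' : q' ∈ Q) :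
    (kneserGraph n k)ᶜ.Adj (exchangeVertex B hb (disjoint_left.1 hQB hq)) (eraseVertex hQ hq') ↔
      q ≠ q' := by
  refine ⟨?_, fun hne => compl_kneserGraph_adj_of_mem (x := q) (y := b')
    (by simp [exchangeVertex]) (by simp [eraseVertex, hne, hq])
    (by simp [exchangeVertex, hbb', hb']) (by simp [eraseVertex, disjoint_right.1 hQB hb'])⟩
  rintro h rfl
  refine compl_kneserGraph_not_adj_of_disjoint (disjoint_left.2 fun z hz hz' => ?_) h
  simp only [exchangeVertex, eraseVertex, mem_insert, mem_erase] at hz hz'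
  rcases hz with rfl | ⟨-, hz⟩
  exacts [hz'.1 rfl, disjoint_left.1 hQB hz'.2 hz]

end KneserVertices

section KneserHard

variable {n k : ℕ} {α : Type*} [LinearOrder α] {r : {s : Finset (Fin n) // s.card = k} → α}
  {Q : Finset (Fin n)} {B : {s : Finset (Fin n) // s.card = k}} {q q' q₀ q₁ q₂ x y : Fin n}

theorem compl_kneserGraph_not_adj_exchangeVertex (hx : x ∈ B.1) (hy : y ∈ B.1)
    (hq : q ∉ B.1) (hq' : q' ∉ B.1) (hqq' : q ≠ q') (hB : B.1 ⊆ {x, y}) :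
    ¬(kneserGraph n k)ᶜ.Adj (exchangeVertex B hx hq) (exchangeVertex B hy hq') := by
  refine compl_kneserGraph_not_adj_of_disjoint (disjoint_left.2 fun z hz hz' => ?_)
  simp only [exchangeVertex, mem_insert, mem_erase] at hz hz'
  rcases hz with rfl | ⟨hzx, hzB⟩ <;> rcases hz' with rfl | ⟨hzy, hzB'⟩
  exacts [hqq' rfl, hq hzB', hq' hzB, by simpa [hzx, hzy] using hB hzB]

theorem exists_compl_kneserGraph_adj_not_adj_exchangeVertex (hk : 3 ≤ k) (hQ : Q.card = k + 1)
    (hQB : Disjoint Q B.1) (hq₀ : q₀ ∈ Q) (hq₁ : q₁ ∈ Q) (hq₂ : q₂ ∈ Q) (ne₀₁ : q₀ ≠ q₁)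
    (ne₁₂ : q₁ ≠ q₂) (ne₀₂ : q₀ ≠ q₂) (hx : x ∈ B.1) :
    ∃ d, (kneserGraph n k)ᶜ.Adj d (eraseVertex hQ hq₁) ∧ (kneserGraph n k)ᶜ.Adj d B ∧
      ¬(kneserGraph n k)ᶜ.Adj d (exchangeVertex B hx (disjoint_left.1 hQB hq₀)) ∧
      ¬(kneserGraph n k)ᶜ.Adj d (exchangeVertex B hx (disjoint_left.1 hQB hq₂)) := by
  obtain ⟨q₃, hq₃⟩ : (((Q.erase q₀).erase q₁).erase q₂).Nonempty := by
    have h₀ := pred_card_le_card_erase (s := Q) (a := q₀)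
    have h₁ := pred_card_le_card_erase (s := Q.erase q₀) (a := q₁)
    have h₂ := pred_card_le_card_erase (s := (Q.erase q₀).erase q₁) (a := q₂)
    exact card_pos.1 (by omega)
  simp only [mem_erase] at hq₃
  have hxQ : x ∉ Q := disjoint_right.1 hQB hx
  have hdisj (q) (hq : q ∈ Q) (hq' : q ∉ (Q.erase q₀).erase q₂) :
      Disjoint (insert x ((Q.erase q₀).erase q₂)) (insert q (B.1.erase x)) := by
    refine disjoint_left.2 fun z hz hz' => ?_
    rcases mem_insert.1 hz with rfl | hz <;> rcases mem_insert.1 hz' with rfl | hz'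
    exacts [hxQ hq, (mem_erase.1 hz').1 rfl, hq' hz,
      disjoint_left.1 hQB (mem_of_mem_erase (mem_of_mem_erase hz)) (mem_of_mem_erase hz')]
  refine ⟨exchangeVertex (eraseVertex hQ hq₀) (b := q₂) (q := x)
    (by simp [eraseVertex, ne₀₂.symm, hq₂]) (by simp [eraseVertex, hxQ]), ?_, ?_,
    compl_kneserGraph_not_adj_of_disjoint (hdisj q₀ hq₀ (by simp)),
    compl_kneserGraph_not_adj_of_disjoint (hdisj q₂ hq₂ (by simp))⟩
  · exact compl_kneserGraph_adj_of_mem (x := q₃) (y := x)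
      (by simp [exchangeVertex, eraseVertex, hq₃]) (by simp [eraseVertex, hq₃])
      (by simp [exchangeVertex]) (by simp [eraseVertex, hxQ])
  · exact compl_kneserGraph_adj_of_mem (x := x) (y := q₁) (by simp [exchangeVertex]) hx
      (by simp [exchangeVertex, eraseVertex, ne₀₁.symm, ne₁₂, hq₁]) (disjoint_left.1 hQB hq₁)

theorem shortcutFrame_compl_kneserGraph (hB : ∀ v, r v ≤ r B) (hQ : Q.card = k + 1)
    (hQB : Disjoint Q B.1) (hq₀ : q₀ ∈ Q) (hq₁ : q₁ ∈ Q) (hq₂ : q₂ ∈ Q) (hx : x ∈ B.1)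
    (hy : y ∈ B.1) (hxy : x ≠ y) (ne₀₁ : q₀ ≠ q₁) (ne₁₂ : q₁ ≠ q₂) (ne₀₂ : q₀ ≠ q₂)
    (h₀₁ : r (eraseVertex hQ hq₀) < r (eraseVertex hQ hq₁))
    (h₁₂ : r (eraseVertex hQ hq₁) < r (eraseVertex hQ hq₂)) :
    (kneserGraph n k)ᶜ.ShortcutFrame r (eraseVertex hQ hq₀) (eraseVertex hQ hq₁)
      (eraseVertex hQ hq₂) B where
  lt₀₁ := h₀₁
  lt₁₂ := h₁₂
  adj₀₁ := compl_kneserGraph_adj_eraseVertex hQ hq₀ hq₁ hq₂ ne₀₁ ne₀₂.symm ne₁₂.symm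
  adj₁₂ := compl_kneserGraph_adj_eraseVertex hQ hq₁ hq₂ hq₀ ne₁₂ ne₀₁ ne₀₂
  adj₀₂ := compl_kneserGraph_adj_eraseVertex hQ hq₀ hq₂ hq₁ ne₀₂ ne₀₁.symm ne₁₂
  le_top := hB
  not_adj₀ := compl_kneserGraph_not_adj_eraseVertex hQ hQB hq₀
  not_adj₂ := compl_kneserGraph_not_adj_eraseVertex hQ hQB hq₂
  exists_mid := by
    have h {q'} (hq' : q' ∈ Q) :=
      compl_kneserGraph_adj_exchangeVertex_eraseVertex_iff hQ hQB hx hy hxy.symm hq₁ hq'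
    exact ⟨_, (h hq₀).2 ne₀₁.symm, (h hq₂).2 ne₁₂, fun h' => (h hq₁).1 h' rfl,
      compl_kneserGraph_adj_exchangeVertex_self hx _ hy hxy.symm⟩

theorem compl_kneserGraph_not_noFourVertexShortcut_of_lt_lt (hk : 2 ≤ k) (hr : Injective r)
    (hB : ∀ v, r v ≤ r B) (hQ : Q.card = k + 1) (hQB : Disjoint Q B.1) (hq₀ : q₀ ∈ Q)
    (hq₁ : q₁ ∈ Q) (hq₂ : q₂ ∈ Q) (hx : x ∈ B.1) (hy : y ∈ B.1) (hxy : x ≠ y)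
    (h₀₁ : r (eraseVertex hQ hq₀) < r (eraseVertex hQ hq₁))
    (h₁₂ : r (eraseVertex hQ hq₁) < r (eraseVertex hQ hq₂)) :
    ¬(kneserGraph n k)ᶜ.NoFourVertexShortcut r := by
  intro hG
  have ne₀₁ : q₀ ≠ q₁ := by rintro rfl; exact h₀₁.false
  have ne₁₂ : q₁ ≠ q₂ := by rintro rfl; exact h₁₂.false
  have ne₀₂ : q₀ ≠ q₂ := by rintro rfl; exact (h₀₁.trans h₁₂).false
  have F := shortcutFrame_compl_kneserGraph hB hQ hQB hq₀ hq₁ hq₂ hx hy hxy ne₀₁ ne₁₂ ne₀₂ h₀₁ h₁₂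
  have adj_iff {q q'} (hq : q ∈ Q) (hq' : q' ∈ Q) :=
    compl_kneserGraph_adj_exchangeVertex_eraseVertex_iff hQ hQB hx hy hxy.symm hq hq'
  have hXB {q} (hq : q ∈ Q) := compl_kneserGraph_adj_exchangeVertex_self hx
    (disjoint_left.1 hQB hq) hy hxy.symm
  have lt_of_not_adj {d} (hd₁ : (kneserGraph n k)ᶜ.Adj d (eraseVertex hQ hq₁))
      (hdB : (kneserGraph n k)ᶜ.Adj d B)
      (hd : ¬(kneserGraph n k)ᶜ.Adj d (exchangeVertex B hx (disjoint_left.1 hQB hq₀))) :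
      r d < r (eraseVertex hQ hq₁) :=
    F.lt_of_not_adj_of_not_adj₀ hr hG ((adj_iff hq₀ hq₁).2 ne₀₁) ((adj_iff hq₀ hq₂).2 ne₀₂)
      (fun h => (adj_iff hq₀ hq₀).1 h rfl) (hXB hq₀) hd₁ hdB hd
  rcases hk.eq_or_lt with rfl | hk
  · have hBxy : B.1 ⊆ {y, x} := (eq_of_subset_of_card_le (insert_subset hy
      (singleton_subset_iff.2 hx)) (by rw [B.2, card_pair hxy.symm])).symm.subset
    have adj_iff' {q'} (hq' : q' ∈ Q) :=
      compl_kneserGraph_adj_exchangeVertex_eraseVertex_iff hQ hQB hy hx hxy hq₂ hq'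
    have hdB := compl_kneserGraph_adj_exchangeVertex_self hy (disjoint_left.1 hQB hq₂) hx hxy
    exact (F.lt_of_not_adj₂ hr hG ((adj_iff' hq₀).2 ne₀₂.symm) ((adj_iff' hq₁).2 ne₁₂.symm)
      (fun h => (adj_iff' hq₂).1 h rfl) hdB).asymm (lt_of_not_adj ((adj_iff' hq₁).2 ne₁₂.symm)
        hdB (compl_kneserGraph_not_adj_exchangeVertex hy hx _ _ ne₀₂.symm hBxy))
  · obtain ⟨d, hd₁, hdB, hd₀, hd₂⟩ := exists_compl_kneserGraph_adj_not_adj_exchangeVertex hk hQ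
      hQB hq₀ hq₁ hq₂ ne₀₁ ne₁₂ ne₀₂ hx
    exact (F.lt_of_not_adj_of_not_adj₂ hr hG ((adj_iff hq₂ hq₀).2 ne₀₂.symm)
      ((adj_iff hq₂ hq₁).2 ne₁₂.symm) (fun h => (adj_iff hq₂ hq₂).1 h rfl) (hXB hq₂) hd₁ hdB
      hd₂).asymm (lt_of_not_adj hd₁ hdB hd₀)

theorem not_noFourVertexShortcut_compl_kneserGraph (hk : 2 ≤ k) (hn : 2 * k < n)
    (hr : Injective r) : ¬(kneserGraph n k)ᶜ.NoFourVertexShortcut r := by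
  have : Nonempty {s : Finset (Fin n) // s.card = k} :=
    let ⟨s, _, hs⟩ := exists_subset_card_eq (s := (univ : Finset (Fin n))) (by simp; omega)
    ⟨⟨s, hs⟩⟩
  obtain ⟨B, hB⟩ := Finite.exists_max r
  obtain ⟨Q, hQB, hQ⟩ := exists_subset_card_eq (s := univ \ B.1) (n := k + 1)
    (by rw [card_univ_sdiff, Fintype.card_fin, B.2]; omega)
  obtain ⟨x, hx, y, hy, hxy⟩ := one_lt_card.1 (by rw [B.2]; omega : 1 < B.1.card)
  obtain ⟨⟨q₀, hq₀⟩, ⟨q₁, hq₁⟩, ⟨q₂, hq₂⟩, h₀₁, h₁₂⟩ := exists_lt_lt_of_injective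
    (hr.comp (eraseVertex_injective hQ)) (by rw [Fintype.card_coe]; omega)
  exact compl_kneserGraph_not_noFourVertexShortcut_of_lt_lt hk hr hB hQ (subset_sdiff.1 hQB).2
    hq₀ hq₁ hq₂ hx hy hxy h₀₁ h₁₂

end KneserHard

theorem kneser_compl_semiTransitive_iff_general (n k : ℕ) (hk : 2 ≤ k) :
    ((kneserGraph n k)ᶜ).SemiTransitive ↔ n ≤ 2 * k := by
  refine ⟨fun h => ?_, fun h =>
    SimpleGraph.semiTransitive_compl_of_adj_unique (kneserGraph_adj_unique h)⟩
  by_contra hn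
  obtain ⟨r, hr, hG⟩ := h.exists_ranking
  exact not_noFourVertexShortcut_compl_kneserGraph hk (not_le.1 hn) hr hG

/-- For `k ≥ 2` and `n ≥ k`, the complement of `K(n,k)` is
semi-transitive iff `n ≤ 2k`. -/
theorem kneser_compl_semiTransitive_iff (n k : ℕ) (hk : 2 ≤ k) (hn : k ≤ n) :
    ((kneserGraph n k)ᶜ).SemiTransitive ↔ n ≤ 2 * k :=
  kneser_compl_semiTransitive_iff_general n k hk
end
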